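/- Let ε ∈ [0, 1/4) and let β_pp, β_qq, β_pq, β_qp be real numbers with |β_pp - 1| ≤ ε, |β_qq - 1| ≤ ε, |β_pq| ≤ ε, |β_qp| ≤ ε. Define A = [[1 - 2β_pp, -β_pq - β_qp], [-β_pq - β_qp, 1 - 2β_qq]] and B = [[-β_pp, -β_pq], [-β_qp, -β_qq]]. Then for any scalar γ > (2ε+1)²/(1-4ε), the symmetric 4×4 block matrix [[A, B], [Bᵀ, -γ I₂]] is negative definite. -/

import Mathlib

set_option maxHeartbeats 1000000

theorem scalar_key_aux (ε bpp bqq bpq bqp γ a b c d : ℝ) (hε0 : 0 ≤ ε) (hε : ε < 1/4)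
    (h1 : |bpp - 1| ≤ ε) (h2 : |bqq - 1| ≤ ε) (h3 : |bpq| ≤ ε) (h4 : |bqp| ≤ ε)
    (hγ : γ > (2*ε + 1)^2 / (1 - 4*ε))
    (hx : a ≠ 0 ∨ b ≠ 0 ∨ c ≠ 0 ∨ d ≠ 0) :
    0 < (2*bpp-1)*a^2 + 2*(bpq+bqp)*a*b + (2*bqq-1)*b^2
        + 2*bpp*a*c + 2*bpq*a*d + 2*bqp*b*c + 2*bqq*b*d + γ*c^2 + γ*d^2 := by
  rw [abs_le] at h1 h2 h3 h4
  have hd : (0:ℝ) < 1 - 4*ε := by linarith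
  have hnum : (0:ℝ) < (2*ε+1)^2 := by positivity
  have hγpos : 0 < γ := lt_trans (div_pos hnum hd) hγ
  have hγ' : (2*ε+1)^2 < γ * (1 - 4*ε) := by
    rw [gt_iff_lt, div_lt_iff₀ hd] at hγ; linarith
  by_cases hab : a = 0 ∧ b = 0
  · obtain ⟨ha, hb⟩ := hab
    subst ha; subst hb
    have hcd : c ≠ 0 ∨ d ≠ 0 := by tauto
    have : 0 < c^2 + d^2 := by
      rcases hcd with h | h
      · positivity
      · positivity
    nlinarith
  · have hs : 0 < a^2 + b^2 := by
      rcases not_and_or.mp hab with h | h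
      · positivity
      · positivity
    have c1 : (1-4*ε)*(a^2+b^2) ≤ (2*bpp-1)*a^2 + 2*(bpq+bqp)*a*b + (2*bqq-1)*b^2 := by
      nlinarith [sq_nonneg (a+b), sq_nonneg (a-b), sq_nonneg a, sq_nonneg b]
    have hbpp2 : bpp^2 ≤ (1+ε)^2 := sq_le_sq' (by linarith) (by linarith)
    have hbqq2 : bqq^2 ≤ (1+ε)^2 := sq_le_sq' (by linarith) (by linarith)
    have hbpq2 : bpq^2 ≤ ε^2 := sq_le_sq' (by linarith) (by linarith)
    have hbqp2 : bqp^2 ≤ ε^2 := sq_le_sq' (by linarith) (by linarith)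
    have h5 : |bpp * bqp + bpq * bqq| ≤ 2*ε*(1+ε) := by
      calc |bpp * bqp + bpq * bqq| ≤ |bpp * bqp| + |bpq * bqq| := abs_add_le _ _
        _ = |bpp| * |bqp| + |bpq| * |bqq| := by rw [abs_mul, abs_mul]
        _ ≤ (1+ε)*ε + ε*(1+ε) := by
            have habpp : |bpp| ≤ 1+ε := abs_le.mpr ⟨by linarith, by linarith⟩
            have habqq : |bqq| ≤ 1+ε := abs_le.mpr ⟨by linarith, by linarith⟩
            have habpq : |bpq| ≤ ε := abs_le.mpr ⟨by linarith, by linarith⟩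
            have habqp : |bqp| ≤ ε := abs_le.mpr ⟨by linarith, by linarith⟩
            exact add_le_add
              (mul_le_mul habpp habqp (abs_nonneg _) (by linarith))
              (mul_le_mul habpq habqq (abs_nonneg _) hε0)
        _ = 2*ε*(1+ε) := by ring
    have h7 : |a * b| ≤ (a^2+b^2)/2 := by
      rw [abs_le]; constructor <;> nlinarith [sq_nonneg (a+b), sq_nonneg (a-b)]
    have h6 : (bpp*bqp + bpq*bqq)*(a*b) ≤ 2*ε*(1+ε)*((a^2+b^2)/2) := by
      calc (bpp*bqp + bpq*bqq)*(a*b) ≤ |(bpp * bqp + bpq * bqq) * (a * b)| := le_abs_self _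
        _ = |bpp * bqp + bpq * bqq| * |a * b| := abs_mul _ _
        _ ≤ (2*ε*(1+ε)) * ((a^2+b^2)/2) := by
            apply mul_le_mul h5 h7 (abs_nonneg _) (by positivity)
    have c2 : (bpp*a + bqp*b)^2 + (bpq*a + bqq*b)^2 ≤ (1+2*ε)^2*(a^2+b^2) := by
      nlinarith [mul_le_mul_of_nonneg_right hbpp2 (sq_nonneg a),
        mul_le_mul_of_nonneg_right hbqq2 (sq_nonneg b),
        mul_le_mul_of_nonneg_right hbpq2 (sq_nonneg a),
        mul_le_mul_of_nonneg_right hbqp2 (sq_nonneg b), h6]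
    have e1 := mul_le_mul_of_nonneg_left c1 hγpos.le
    have e3 := mul_pos (sub_pos.mpr hγ') hs
    have key : 0 < γ * ((2*bpp-1)*a^2 + 2*(bpq+bqp)*a*b + (2*bqq-1)*b^2
        + 2*bpp*a*c + 2*bpq*a*d + 2*bqp*b*c + 2*bqq*b*d + γ*c^2 + γ*d^2) := by
      nlinarith [sq_nonneg (γ*c + bpp*a + bqp*b), sq_nonneg (γ*d + bpq*a + bqq*b), e1, c2, e3]
    by_contra hcon
    push_neg at hcon
    nlinarith [mul_nonpos_of_nonneg_of_nonpos hγpos.le hcon]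

theorem block_matrix_negdef (ε bpp bqq bpq bqp γ : ℝ) (hε0 : 0 ≤ ε) (hε : ε < 1/4)
    (h1 : |bpp - 1| ≤ ε) (h2 : |bqq - 1| ≤ ε) (h3 : |bpq| ≤ ε) (h4 : |bqp| ≤ ε)
    (hγ : γ > (2*ε + 1)^2 / (1 - 4*ε)) :
    (-(Matrix.fromBlocks
        (!![1 - 2*bpp, -bpq - bqp; -bpq - bqp, 1 - 2*bqq] : Matrix (Fin 2) (Fin 2) ℝ)
        (!![-bpp, -bpq; -bqp, -bqq] : Matrix (Fin 2) (Fin 2) ℝ)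
        (!![-bpp, -bpq; -bqp, -bqq] : Matrix (Fin 2) (Fin 2) ℝ).transpose
        (-(γ • (1 : Matrix (Fin 2) (Fin 2) ℝ))))).PosDef := by
  rw [Matrix.posDef_iff_dotProduct_mulVec]
  constructor
  · show _ = _
    ext i j
    rcases i with i | i <;> rcases j with j | j <;> fin_cases i <;> fin_cases j <;>
      simp [Matrix.conjTranspose, Matrix.fromBlocks, Matrix.one_apply, Matrix.transpose_apply,
        Matrix.vecHead, Matrix.vecTail]
  · intro x hx
    have hx' : x (Sum.inl 0) ≠ 0 ∨ x (Sum.inl 1) ≠ 0 ∨ x (Sum.inr 0) ≠ 0 ∨ x (Sum.inr 1) ≠ 0 := by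
      by_contra h
      push_neg at h
      apply hx
      funext i
      rcases i with i | i <;> fin_cases i <;> simp [h.1, h.2.1, h.2.2.1, h.2.2.2]
    have key := scalar_key_aux ε bpp bqq bpq bqp γ (x (Sum.inl 0)) (x (Sum.inl 1))
      (x (Sum.inr 0)) (x (Sum.inr 1)) hε0 hε h1 h2 h3 h4 hγ hx'
    simp only [dotProduct, Matrix.mulVec, Fintype.sum_sum_type, Fin.sum_univ_two,
      Matrix.fromBlocks_apply₁₁, Matrix.fromBlocks_apply₁₂, Matrix.fromBlocks_apply₂₁,
      Matrix.fromBlocks_apply₂₂, Matrix.neg_apply, Matrix.transpose_apply, Matrix.smul_apply,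
      Matrix.one_apply, Matrix.cons_val', Matrix.cons_val_zero, Matrix.cons_val_one,
      Matrix.head_cons, Matrix.head_fin_const, Matrix.empty_val', Matrix.cons_val_fin_one,
      star_trivial, smul_eq_mul]
    norm_num
    nlinarith [key]
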